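/- Let T₁,...,T_N be i.i.d. shifted exponential variables with rate λ_s > 0, shift c ≥ 0, let T_n be one of them, let T_N(K) be the K-th order statistic, and let T_D > c. Then P(T_n > min{T_D, T_N(K)}) = e^{-λ_s(T_D-c)} + (N-K)/N - (1/N)·Σ_{h=K+1}^N Z_h, where Z_h = P(T_D < T_N(h)). -/

import Mathlib

/-!
Let `A = {T_D < T_n}` and `B = {T_N(K) < T_n}`; the event is `A ∪ B`, and
`P(A ∪ B) = P(A) + P(B) - P(A ∩ B)`. The law is atomless, so the sample is a.s. injective and its
strict ranks `r_m = #{i | T_i < T_m}` are a permutation of `0, …, N - 1`. Then `B = {K ≤ r_n}`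
and `A ∩ B = {max K C ≤ r_n}` with `C = #{i | T_i ≤ T_D}`. By exchangeability, for a threshold
`g` invariant under permutations, `N · P(g ≤ r_n) = E #{m | g ≤ r_m} = E (N - g)`. With `g = K`
this gives `(N - K) / N`, and with `g = max K C` it gives
`E (N - max K C) = ∑_{h = K+1}^N P(C < h) = ∑_{h = K+1}^N P(T_D < T_N(h))`.
-/

open MeasureTheory ProbabilityTheory Real

/-- The shifted exponential distribution with rate `l` and shift `c`:
density `l * exp (-l*(t-c))` for `t > c`, `0` otherwise. -/
noncomputable def shiftedExp (l c : ℝ) : MeasureTheory.Measure ℝ :=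
  MeasureTheory.volume.withDensity
    (fun t => ENNReal.ofReal (if c < t then l * Real.exp (-l * (t - c)) else 0))

/-- The `K`-th order statistic (K-th smallest value) of the family `T` evaluated at `ω`. -/
noncomputable def orderStat {Ω : Type*} {N : ℕ} (T : Fin N → Ω → ℝ) (K : ℕ) (ω : Ω) : ℝ :=
  sInf {x : ℝ | K ≤ Nat.card {i : Fin N // T i ω ≤ x}}

open Finset Function
open scoped ENNReal

lemma shiftedExp_Ioi {l : ℝ} (hl : 0 < l) {c x : ℝ} (hx : c ≤ x) :
    shiftedExp l c (Set.Ioi x) = ENNReal.ofReal (exp (-l * (x - c))) := by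
  have hdens : ∀ t ∈ Set.Ioi x, ENNReal.ofReal (if c < t then l * exp (-l * (t - c)) else 0)
      = ENNReal.ofReal (l * exp (l * c) * exp (-l * t)) := fun t ht => by
    rw [if_pos (hx.trans_lt ht), mul_assoc, ← exp_add]
    ring_nf
  have hint : IntegrableOn (fun t => l * exp (l * c) * exp (-l * t)) (Set.Ioi x) :=
    (integrableOn_exp_mul_Ioi (neg_lt_zero.2 hl) x).const_mul _
  rw [shiftedExp, withDensity_apply _ measurableSet_Ioi,
    setLIntegral_congr_fun measurableSet_Ioi hdens,
    ← ofReal_integral_eq_lintegral_ofReal hint (.of_forall fun t => by positivity),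
    integral_const_mul, integral_exp_mul_Ioi (neg_lt_zero.2 hl)]
  congr 1
  rw [neg_div_neg_eq, mul_comm l, mul_assoc, mul_div_cancel₀ _ hl.ne', ← exp_add]
  ring_nf

lemma shiftedExp_Iic (l c : ℝ) : shiftedExp l c (Set.Iic c) = 0 := by
  rw [shiftedExp, withDensity_apply _ measurableSet_Iic]
  exact setLIntegral_eq_zero measurableSet_Iic fun t ht => by simp [not_lt.2 (Set.mem_Iic.1 ht)]

lemma isProbabilityMeasure_shiftedExp {l : ℝ} (hl : 0 < l) (c : ℝ) :
    IsProbabilityMeasure (shiftedExp l c) := by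
  constructor
  rw [← Set.Iic_union_Ioi (a := c), measure_union (Set.Iic_disjoint_Ioi le_rfl) measurableSet_Ioi,
    shiftedExp_Iic, shiftedExp_Ioi hl le_rfl]
  simp

instance nullSingletonClass_shiftedExp (l c : ℝ) : NullSingletonClass (shiftedExp l c) := by
  unfold shiftedExp; infer_instance

lemma Antitone.le_card_filter_iff {ι : Type*} [Fintype ι] {p : ℝ → Prop} [DecidablePred p]
    (hp : Antitone p) (v : ι → ℝ) {K : ℕ} (hK : 1 ≤ K) :
    K ≤ #{i | p (v i)} ↔ ∃ j, K ≤ #{i | v i ≤ v j} ∧ p (v j) := by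
  constructor
  · intro h
    obtain ⟨j, hj, hmax⟩ := exists_max_image _ v (card_pos.1 (hK.trans h))
    refine ⟨j, h.trans (card_le_card fun i hi => ?_), (mem_filter.1 hj).2⟩
    exact mem_filter.2 ⟨mem_univ i, hmax i hi⟩
  · rintro ⟨j, hj, hjs⟩
    refine hj.trans (card_le_card fun i hi => ?_)
    exact mem_filter.2 ⟨mem_univ i, hp (mem_filter.1 hi).2 hjs⟩

section OrderStat

variable {Ω : Type*} {N K : ℕ}

lemma exists_orderStat_eq_inf' (T : Fin N → Ω → ℝ) (hK : 1 ≤ K) (hKN : K ≤ N) (ω : Ω) :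
    ∃ h : ({j | K ≤ #{i | T i ω ≤ T j ω}} : Finset (Fin N)).Nonempty,
      orderStat T K ω = inf' _ h fun j => T j ω := by
  have hne : ({j | K ≤ #{i | T i ω ≤ T j ω}} : Finset (Fin N)).Nonempty := by
    obtain ⟨j, -, hj⟩ :=
      exists_max_image univ (fun j => T j ω) (univ_nonempty_iff.2 ⟨⟨0, by omega⟩⟩)
    exact ⟨j, mem_filter.2 ⟨mem_univ j, by simpa [filter_true_of_mem fun i _ => hj i (mem_univ i)]⟩⟩
  refine ⟨hne, ?_⟩
  have hset : {x : ℝ | K ≤ Nat.card {i : Fin N // T i ω ≤ x}}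
      = Set.Ici (inf' _ hne fun j => T j ω) := by
    ext x
    rw [Set.mem_ofPred_eq, Nat.card_eq_fintype_card, Fintype.card_subtype,
      Antitone.le_card_filter_iff (p := (· ≤ x)) (fun _ _ => le_trans) _ hK, Set.mem_Ici,
      inf'_le_iff]
    simp
  rw [orderStat, hset, csInf_Ici]

lemma orderStat_le_iff {T : Fin N → Ω → ℝ} (hK : 1 ≤ K) (hKN : K ≤ N) (ω : Ω) (x : ℝ) :
    orderStat T K ω ≤ x ↔ K ≤ #{i | T i ω ≤ x} := by
  obtain ⟨hne, h⟩ := exists_orderStat_eq_inf' T hK hKN ω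
  rw [h, inf'_le_iff, Antitone.le_card_filter_iff (p := (· ≤ x)) (fun _ _ => le_trans) _ hK]
  simp

lemma orderStat_lt_iff {T : Fin N → Ω → ℝ} (hK : 1 ≤ K) (hKN : K ≤ N) (ω : Ω) (x : ℝ) :
    orderStat T K ω < x ↔ K ≤ #{i | T i ω < x} := by
  obtain ⟨hne, h⟩ := exists_orderStat_eq_inf' T hK hKN ω
  rw [h, inf'_lt_iff,
    Antitone.le_card_filter_iff (p := (· < x)) (fun _ _ => lt_of_le_of_lt) _ hK]
  simp

end OrderStat

section CountingMeasure

variable {X ι : Type*} [MeasurableSpace X]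

lemma measurable_card_filter [Fintype ι] {p : ι → X → Prop} [∀ i x, Decidable (p i x)]
    (hp : ∀ i, MeasurableSet {x | p i x}) : Measurable fun x => #{i | p i x} := by
  simp only [card_filter]
  exact Finset.measurable_sum _ fun i _ => (measurable_const.ite (hp i) measurable_const)

lemma lintegral_card_filter_mem (μ : Measure X) (s : Finset ι) {E : ι → Set X}
    [∀ i x, Decidable (x ∈ E i)] (hE : ∀ i ∈ s, MeasurableSet (E i)) :
    ∫⁻ x, (#{i ∈ s | x ∈ E i} : ℝ≥0∞) ∂μ = ∑ i ∈ s, μ (E i) := by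
  have hcard : ∀ x, (#{i ∈ s | x ∈ E i} : ℝ≥0∞) = ∑ i ∈ s, (E i).indicator 1 x := fun x => by
    simp only [Set.indicator_apply, Pi.one_apply, sum_boole]
  simp_rw [hcard]
  rw [lintegral_finsetSum _ fun i hi => measurable_one.indicator (hE i hi)]
  exact sum_congr rfl fun i hi => lintegral_indicator_one (hE i hi)

end CountingMeasure

lemma measurable_card_filter_le {ι : Type*} [Fintype ι] (x : ℝ) :
    Measurable fun v : ι → ℝ => #{i | v i ≤ x} :=
  measurable_card_filter fun i => measurableSet_le (measurable_pi_apply i) measurable_const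

lemma card_Icc_filter_lt (K C N : ℕ) : #{h ∈ Icc (K + 1) N | C < h} = N - max K C := by
  have : {h ∈ Icc (K + 1) N | C < h} = Icc (max K C + 1) N := by
    ext h; simp only [mem_filter, mem_Icc]; omega
  rw [this, Nat.card_Icc]
  omega

section CoordRank

variable {ι : Type*} [Fintype ι]

/-- For injective `v`, the position of `v m` in increasing order, counted from `0`. -/
noncomputable def coordRank (v : ι → ℝ) (m : ι) : ℕ := #{i | v i < v m}

lemma card_filter_comp_perm (p : ι → Prop) [DecidablePred p] (σ : Equiv.Perm ι) :
    #{i | p (σ i)} = #{i | p i} :=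
  card_equiv σ (by simp)

lemma coordRank_comp_perm (v : ι → ℝ) (σ : Equiv.Perm ι) (m : ι) :
    coordRank (v ∘ σ) m = coordRank v (σ m) :=
  card_filter_comp_perm (fun i => v i < v (σ m)) σ

lemma coordRank_lt_card (v : ι → ℝ) (m : ι) : coordRank v m < Fintype.card ι :=
  card_lt_univ_of_notMem (x := m) (by simp)

lemma coordRank_lt_coordRank {v : ι → ℝ} {a b : ι} (hab : v a < v b) :
    coordRank v a < coordRank v b :=
  card_lt_card <| (ssubset_iff_of_subset fun i hi => by
    simp only [mem_filter, mem_univ, true_and] at hi ⊢; exact hi.trans hab).2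
    ⟨a, by simpa using hab, by simp⟩

lemma coordRank_injective {v : ι → ℝ} (hv : Injective v) : Injective (coordRank v) := by
  intro a b hab
  rcases lt_trichotomy (v a) (v b) with h | h | h
  · exact absurd hab (coordRank_lt_coordRank h).ne
  · exact hv h
  · exact absurd hab (coordRank_lt_coordRank h).ne'

lemma card_filter_le_coordRank {v : ι → ℝ} (hv : Injective v) (k : ℕ) :
    #{m | k ≤ coordRank v m} = Fintype.card ι - k := by
  have himage : univ.image (coordRank v) = range (Fintype.card ι) :=
    eq_of_subset_of_card_le (fun _ hj => by
      obtain ⟨m, -, rfl⟩ := mem_image.1 hj; exact mem_range.2 (coordRank_lt_card v m))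
      (by rw [card_range, card_image_of_injective _ (coordRank_injective hv), card_univ])
  have : #{m | k ≤ coordRank v m} = #{j ∈ range (Fintype.card ι) | k ≤ j} := by
    rw [← himage, filter_image, card_image_of_injective _ (coordRank_injective hv)]
  rw [this, ← Nat.card_Ico k, ← Nat.Ico_zero_eq_range]
  congr 1
  ext j; simp [and_comm]

lemma lt_iff_card_filter_le_le_coordRank (v : ι → ℝ) (x : ℝ) (m : ι) :
    x < v m ↔ #{i | v i ≤ x} ≤ coordRank v m := by
  refine ⟨fun h => card_le_card fun i hi => ?_, fun h => ?_⟩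
  · simp only [mem_filter, mem_univ, true_and] at hi ⊢; exact hi.trans_lt h
  · by_contra! hm
    refine h.not_gt (card_lt_card <| (ssubset_iff_of_subset fun i hi => ?_).2 ⟨m, ?_, ?_⟩)
    · simp only [mem_filter, mem_univ, true_and] at hi ⊢; exact hi.le.trans hm
    · simpa using hm
    · simp

lemma measurable_coordRank (m : ι) : Measurable fun v : ι → ℝ => coordRank v m :=
  measurable_card_filter fun i => measurableSet_lt (measurable_pi_apply i) (measurable_pi_apply m)

end CoordRank

section IIDProduct

variable {ι α : Type*} [Fintype ι] [MeasurableSpace α] (ν : Measure α)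

lemma measurePreserving_comp_perm [SigmaFinite ν] (σ : Equiv.Perm ι) :
    MeasurePreserving (fun v : ι → α => v ∘ σ) (Measure.pi fun _ => ν) (Measure.pi fun _ => ν) :=
  measurePreserving_arrowCongr' (fun _ => ν) (fun _ => ν) σ.symm (MeasurableEquiv.refl α)
    fun _ => MeasurePreserving.id ν

variable [MeasurableEq α] [IsProbabilityMeasure ν] [NullSingletonClass ν]

lemma pi_setOf_eq_eq_zero {i j : ι} (hij : i ≠ j) :
    Measure.pi (fun _ => ν) {v | v i = v j} = 0 := by
  have hind : IndepFun (eval i) (eval j) (Measure.pi fun _ : ι => ν) :=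
    (iIndepFun_pi (X := fun _ => id) fun _ => aemeasurable_id).indepFun hij
  have hlaw : (Measure.pi fun _ : ι => ν).map (fun v => (v i, v j)) = ν.prod ν := by
    rw [(indepFun_iff_map_prod_eq_prod_map_map (measurable_pi_apply i).aemeasurable
      (measurable_pi_apply j).aemeasurable).1 hind, (measurePreserving_eval _ i).map_eq,
      (measurePreserving_eval _ j).map_eq]
  have hsection : ∀ x : α, Prod.mk x ⁻¹' Set.diagonal α = {x} := fun x => by
    ext; simp [eq_comm]
  change Measure.pi _ ((fun v : ι → α => (v i, v j)) ⁻¹' Set.diagonal α) = 0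
  rw [← Measure.map_apply (by fun_prop) measurableSet_diagonal, hlaw,
    Measure.prod_apply measurableSet_diagonal]
  simp [hsection]

lemma ae_injective_pi : ∀ᵐ v ∂Measure.pi (fun _ : ι => ν), Injective v := by
  have hpair : ∀ i j : ι, ∀ᵐ v ∂Measure.pi (fun _ => ν), v i = v j → i = j := fun i j => by
    by_cases hij : i = j
    · exact .of_forall fun _ _ => hij
    · filter_upwards [measure_eq_zero_iff_ae_notMem.1 (pi_setOf_eq_eq_zero ν hij)] with v hv h
      exact absurd h hv
  simpa only [Injective, ae_all_iff] using hpair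

end IIDProduct

section Exchangeability

variable {ι : Type*} [Fintype ι] (ν : Measure ℝ) [IsProbabilityMeasure ν] [NullSingletonClass ν]

theorem card_mul_pi_le_coordRank {g : (ι → ℝ) → ℕ} (hg : Measurable g)
    (hg_perm : ∀ (σ : Equiv.Perm ι) v, g (v ∘ σ) = g v) (n : ι) :
    Fintype.card ι * Measure.pi (fun _ => ν) {v | g v ≤ coordRank v n}
      = ∫⁻ v, ((Fintype.card ι - g v : ℕ) : ℝ≥0∞) ∂Measure.pi fun _ => ν := by
  classical
  set μ := Measure.pi fun _ : ι => ν
  have hE : ∀ m, MeasurableSet {v : ι → ℝ | g v ≤ coordRank v m} := fun m =>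
    measurableSet_le hg (measurable_coordRank m)
  have hsymm : ∀ m, μ {v | g v ≤ coordRank v m} = μ {v | g v ≤ coordRank v n} := fun m => by
    rw [← (measurePreserving_comp_perm ν (Equiv.swap n m)).measure_preimage
      (hE n).nullMeasurableSet]
    congr 1
    ext v
    simp [hg_perm, coordRank_comp_perm]
  calc (Fintype.card ι : ℝ≥0∞) * μ {v | g v ≤ coordRank v n}
      = ∑ m, μ {v | g v ≤ coordRank v m} := by simp [hsymm]
    _ = ∫⁻ v, (#{m | g v ≤ coordRank v m} : ℝ≥0∞) ∂μ :=
      (lintegral_card_filter_mem μ univ fun m _ => hE m).symm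
    _ = ∫⁻ v, ((Fintype.card ι - g v : ℕ) : ℝ≥0∞) ∂μ := by
      refine lintegral_congr_ae ?_
      filter_upwards [ae_injective_pi ν] with v hv
      rw [card_filter_le_coordRank hv]

theorem pi_real_lt_or_le_coordRank {K : ℕ} (hKN : K ≤ Fintype.card ι) (x : ℝ) (n : ι) :
    (Measure.pi fun _ => ν).real {v | x < v n ∨ K ≤ coordRank v n}
      = ν.real (Set.Ioi x) + ((Fintype.card ι : ℝ) - K) / Fintype.card ι
        - (1 / (Fintype.card ι : ℝ)) * ∑ h ∈ Icc (K + 1) (Fintype.card ι),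
            (Measure.pi fun _ => ν).real {v : ι → ℝ | #{i | v i ≤ x} < h} := by
  set μ := Measure.pi fun _ : ι => ν
  set N := Fintype.card ι
  set C := fun v : ι → ℝ => #{i | v i ≤ x}
  set A := {v : ι → ℝ | x < v n}
  set B := {v : ι → ℝ | K ≤ coordRank v n}
  have hA : μ.real A = ν.real (Set.Ioi x) :=
    (measurePreserving_eval (fun _ => ν) n).measureReal_preimage
      measurableSet_Ioi.nullMeasurableSet
  have hB : N * μ.real B = N - K := by
    have := card_mul_pi_le_coordRank ν (g := fun _ => K) measurable_const (fun _ _ => rfl) n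
    rw [lintegral_const, measure_univ, mul_one] at this
    have := congrArg ENNReal.toReal this
    rwa [ENNReal.toReal_mul, ENNReal.toReal_natCast, ENNReal.toReal_natCast,
      Nat.cast_sub hKN] at this
  have hAB : N * μ.real (A ∩ B) = ∑ h ∈ Icc (K + 1) N, μ.real {v | C v < h} := by
    have hinter : A ∩ B = {v | max K (C v) ≤ coordRank v n} := by
      ext v
      simp only [A, B, C, Set.mem_inter_iff, Set.mem_ofPred_eq, max_le_iff,
        lt_iff_card_filter_le_le_coordRank v x n, and_comm]
    have hperm : ∀ (σ : Equiv.Perm ι) v, max K (C (v ∘ σ)) = max K (C v) := fun σ v => by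
      simp only [C, comp_apply, card_filter_comp_perm (fun i => v i ≤ x) σ]
    have hcount : (N : ℝ≥0∞) * μ (A ∩ B) = ∑ h ∈ Icc (K + 1) N, μ {v | C v < h} := calc
      (N : ℝ≥0∞) * μ (A ∩ B) = ∫⁻ v, ((N - max K (C v) : ℕ) : ℝ≥0∞) ∂μ := by
        rw [hinter]
        exact card_mul_pi_le_coordRank ν (measurable_const.max (measurable_card_filter_le x))
          hperm n
      _ = ∫⁻ v, (#{h ∈ Icc (K + 1) N | v ∈ {w | C w < h}} : ℝ≥0∞) ∂μ := by
        simp only [Set.mem_ofPred_eq, card_Icc_filter_lt]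
      _ = ∑ h ∈ Icc (K + 1) N, μ {v | C v < h} :=
        lintegral_card_filter_mem μ _ fun h _ =>
          measurableSet_lt (measurable_card_filter_le x) measurable_const
    have := congrArg ENNReal.toReal hcount
    rwa [ENNReal.toReal_mul, ENNReal.toReal_natCast,
      ENNReal.toReal_sum fun _ _ => measure_ne_top _ _] at this
  have hunion := measureReal_union_add_inter (μ := μ) (s := A)
    (measurableSet_le measurable_const (measurable_coordRank n))
  have hN : (N : ℝ) ≠ 0 := Nat.cast_ne_zero.2 (Fintype.card_pos_iff.2 ⟨n⟩).ne'
  rw [Set.ofPred_or]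
  field_simp
  linear_combination (N : ℝ) * hunion - hAB + hB + N * hA

end Exchangeability

theorem prob_fail_reception_general
    {Ω : Type*} [MeasurableSpace Ω] (P : MeasureTheory.Measure Ω) [IsProbabilityMeasure P]
    (N K : ℕ) (hK : 1 ≤ K) (hKN : K ≤ N)
    (l c TD : ℝ) (hl : 0 < l) (hTD : c < TD)
    (T : Fin N → Ω → ℝ) (hT : ∀ i, Measurable (T i)) (n : Fin N)
    (hlaw : MeasureTheory.Measure.map (fun ω i => T i ω) P
      = MeasureTheory.Measure.pi (fun _ : Fin N => shiftedExp l c)) :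
    (P {ω | min TD (orderStat T K ω) < T n ω}).toReal
      = Real.exp (-l * (TD - c)) + ((N : ℝ) - K) / N
          - (1 / (N : ℝ)) * ∑ h ∈ Finset.Icc (K + 1) N, (P {ω | TD < orderStat T h ω}).toReal := by
  have := isProbabilityMeasure_shiftedExp hl c
  set Φ : Ω → Fin N → ℝ := fun ω i => T i ω
  have hP : ∀ S, MeasurableSet S → P (Φ ⁻¹' S) = Measure.pi (fun _ => shiftedExp l c) S :=
    fun S hS => by rw [← Measure.map_apply (measurable_pi_lambda _ hT) hS, hlaw]
  have hfail : P {ω | min TD (orderStat T K ω) < T n ω}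
      = Measure.pi (fun _ => shiftedExp l c) {v | TD < v n ∨ K ≤ coordRank v n} := by
    have hmeas : MeasurableSet {v : Fin N → ℝ | TD < v n ∨ K ≤ coordRank v n} :=
      (measurableSet_lt measurable_const (measurable_pi_apply n)).union
        (measurableSet_le measurable_const (measurable_coordRank n))
    rw [← hP _ hmeas]
    simp only [min_lt_iff, orderStat_lt_iff hK hKN, coordRank, Φ, Set.preimage_ofPred_eq]
  have hsuccess : ∀ h ∈ Icc (K + 1) N, P {ω | TD < orderStat T h ω}
      = Measure.pi (fun _ => shiftedExp l c) {v | #{i | v i ≤ TD} < h} := fun h hh => by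
    rw [← hP _ (measurableSet_lt (measurable_card_filter_le TD) measurable_const)]
    simp only [← not_le, orderStat_le_iff (by grind) (mem_Icc.1 hh).2, Φ,
      Set.preimage_ofPred_eq]
  have hlawlevel := pi_real_lt_or_le_coordRank (shiftedExp l c)
    (hKN.trans_eq (Fintype.card_fin N).symm) TD n
  simp only [Fintype.card_fin, measureReal_def] at hlawlevel
  rw [hfail, hlawlevel, shiftedExp_Ioi hl hTD.le, ENNReal.toReal_ofReal (exp_nonneg _)]
  congr 2
  exact sum_congr rfl fun h hh => by rw [hsuccess h hh]

theorem prob_fail_reception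
    {Ω : Type*} [MeasurableSpace Ω] (P : MeasureTheory.Measure Ω) [IsProbabilityMeasure P]
    (N K : ℕ) (hK : 1 ≤ K) (hKN : K ≤ N)
    (l c TD : ℝ) (hl : 0 < l) (hc : 0 ≤ c) (hTD : c < TD)
    (T : Fin N → Ω → ℝ) (hT : ∀ i, Measurable (T i)) (n : Fin N)
    (hlaw : MeasureTheory.Measure.map (fun ω i => T i ω) P
      = MeasureTheory.Measure.pi (fun _ : Fin N => shiftedExp l c)) :
    (P {ω | min TD (orderStat T K ω) < T n ω}).toReal
      = Real.exp (-l * (TD - c)) + ((N : ℝ) - K) / N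
          - (1 / (N : ℝ)) * ∑ h ∈ Finset.Icc (K + 1) N, (P {ω | TD < orderStat T h ω}).toReal :=
  prob_fail_reception_general P N K hK hKN l c TD hl hTD T hT n hlaw
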